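/- arXiv:1512.09339 — 4 statements merged into one kernel-verified Lean document; each statement's English description precedes it below -/
import Mathlib

section
/- A structural matrix algebra M(B,k) is a Frobenius algebra if and only if B = (I_1 × I_1) ∪ … ∪ (I_r × I_r) for some partition I_1,…,I_r of {1,…,n}; equivalently, if and only if the preorder B is symmetric. -/
/-- The structural matrix algebra `M(B, k)` associated to a reflexive transitive relation `B`
on `{1, …, n}`: the subalgebra of `Mₙ(k)` of matrices whose `(i,j)`-entry is zero
whenever `(i,j) ∉ B`. -/
def structuralMatrixAlgebra (k : Type*) [Field k] {n : ℕ} (B : Fin n → Fin n → Prop)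
    (hrefl : ∀ i, B i i) (htrans : ∀ i j l, B i j → B j l → B i l) :
    Subalgebra k (Matrix (Fin n) (Fin n) k) where
  carrier := {A | ∀ i j, ¬ B i j → A i j = 0}
  mul_mem' := by
    classical
    intro A C hA hC i j hij
    simp only [Set.mem_setOf_eq] at hA hC
    rw [Matrix.mul_apply]
    refine Finset.sum_eq_zero fun l _ => ?_
    by_cases h : B i l
    · rw [hC l j fun h' => hij (htrans i l j h h'), mul_zero]
    · rw [hA i l h, zero_mul]
  one_mem' := by
    intro i j hij
    have : i ≠ j := fun h => hij (h ▸ hrefl i)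
    simp [Matrix.one_apply, this]
  add_mem' := by
    intro A C hA hC i j hij
    simp only [Set.mem_setOf_eq] at hA hC
    simp [Matrix.add_apply, hA i j hij, hC i j hij]
  zero_mem' := by intro i j _; simp
  algebraMap_mem' := by
    intro c i j hij
    have : i ≠ j := fun h => hij (h ▸ hrefl i)
    simp [Matrix.algebraMap_matrix_apply, this]

/-- A finite dimensional `k`-algebra is Frobenius if there is a linear functional `l` whose
associated bilinear form `(a, b) ↦ l (a * b)` is nondegenerate. -/
def IsFrobeniusAlgebra (k A : Type*) [Field k] [Ring A] [Algebra k A] : Prop :=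
  ∃ l : A →ₗ[k] k,
    (∀ a : A, (∀ b : A, l (a * b) = 0) → a = 0) ∧
    (∀ b : A, (∀ a : A, l (a * b) = 0) → b = 0)

/-!
If `B` is symmetric, the trace form is nondegenerate on `M(B, k)`: the matrix unit `E_ji` lies
in `M(B, k)` whenever `B i j` does, and `tr (x E_ji) = x_ij`.

Conversely, write a Frobenius functional as `x ↦ tr (C x)`. For a matrix `x = w e_jᵀ` supported
in column `j` (so `w` lives on `in(j) = {i | B i j}`) and any `y`, `x y = w (row j of y)` and row
`j` of `y` lives on `out(j) = {q | B j q}`; so `tr (C x y) = (C w) ⬝ (row j of y)`, and left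
nondegeneracy makes `w ↦ (C w)|out(j)` injective, whence `#in(j) ≤ #out(j)`. In a finite preorder
with this property, an element `m ≥ b` with the smallest up-set is maximal, so its up-set lies in
its down-set and has at least its size, hence equals it; this forces `B` to be symmetric. A
symmetric preorder is an equivalence relation, and its classes are the blocks `I_t`.
-/

open Matrix Finset

theorem symm_of_card_le_card {α : Type*} [Fintype α] {r : α → α → Prop} [DecidableRel r]
    (hrefl : ∀ a, r a a) (htrans : ∀ a b c, r a b → r b c → r a c)
    (hcard : ∀ b, #{a | r a b} ≤ #{c | r b c}) {a b : α} (hab : r a b) : r b a := by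
  obtain ⟨m, hbm, hmin⟩ := Finset.exists_min_image {c | r b c} (fun m => #{c | r m c})
    ⟨b, by simp [hrefl]⟩
  simp only [Finset.mem_filter, Finset.mem_univ, true_and] at hbm hmin
  have hmax : ∀ z, r m z → r z m := by
    intro z hmz
    have hsub : ({c | r z c} : Finset α) ⊆ ({c | r m c} : Finset α) := by
      intro c; simpa using htrans m z c hmz
    have hm : m ∈ ({c | r z c} : Finset α) := by
      rw [Finset.eq_of_subset_of_card_le hsub (hmin z (htrans b m z hbm hmz))]
      simp [hrefl]
    simpa using hm
  have hsub : ({c | r m c} : Finset α) ⊆ ({c | r c m} : Finset α) := by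
    intro c; simpa using hmax c
  have heq := Finset.eq_of_subset_of_card_le hsub (hcard m)
  have ham : a ∈ ({c | r m c} : Finset α) := by
    rw [heq]; simpa using htrans a b m hab hbm
  exact htrans b m a hbm (by simpa using ham)

theorem Setoid.exists_fin_indexed_partition {α : Type*} [Fintype α] (s : Setoid α) :
    ∃ (r : ℕ) (I : Fin r → Finset α),
      (∀ t u, t ≠ u → Disjoint (I t) (I u)) ∧ (∀ a, ∃ t, a ∈ I t) ∧
      ∀ a b, s a b ↔ ∃ t, a ∈ I t ∧ b ∈ I t := by
  classical
  let e := Fintype.equivFin (Quotient s)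
  refine ⟨Fintype.card (Quotient s), fun t => {a | ⟦a⟧ = e.symm t}, ?_,
    fun a => ⟨e ⟦a⟧, by simp⟩, ?_⟩
  · intro t u htu
    rw [Finset.disjoint_left]
    intro a hat hau
    simp only [Finset.mem_filter, Finset.mem_univ, true_and] at hat hau
    exact htu (e.symm.injective (hat.symm.trans hau))
  · intro a b
    simp only [Finset.mem_filter, Finset.mem_univ, true_and]
    refine ⟨fun h => ⟨e ⟦a⟧, by simp, by simpa using (Quotient.sound h).symm⟩, ?_⟩
    rintro ⟨t, ha, hb⟩
    exact Quotient.exact (ha.trans hb.symm)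

theorem Matrix.exists_eq_trace_mul {m k : Type*} [Fintype m] [DecidableEq m] [Field k]
    (Λ : Matrix m m k →ₗ[k] k) : ∃ C : Matrix m m k, ∀ M, Λ M = trace (C * M) := by
  refine ⟨of fun j i => Λ (single i j 1), fun M => ?_⟩
  conv_lhs => rw [matrix_eq_sum_single M]
  simp only [map_sum, trace, diag, mul_apply, of_apply]
  rw [Finset.sum_comm]
  refine Finset.sum_congr rfl fun i _ => Finset.sum_congr rfl fun j _ => ?_
  rw [show single j i (M j i) = M j i • single j i (1 : k) by simp [smul_single], map_smul,
    smul_eq_mul, mul_comm]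

theorem Matrix.exists_eq_trace_mul_of_submodule {m k : Type*} [Fintype m] [DecidableEq m]
    [Field k] {p : Submodule k (Matrix m m k)} (l : p →ₗ[k] k) :
    ∃ C : Matrix m m k, ∀ x : p, l x = trace (C * (x : Matrix m m k)) := by
  obtain ⟨Λ, hΛ⟩ := LinearMap.exists_extend l
  obtain ⟨C, hC⟩ := exists_eq_trace_mul Λ
  exact ⟨C, fun x => by rw [← hC, ← hΛ, LinearMap.comp_apply, Submodule.subtype_apply]⟩

namespace structuralMatrixAlgebra

variable {k : Type*} [Field k] {n : ℕ} {B : Fin n → Fin n → Prop}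
  {hrefl : ∀ i, B i i} {htrans : ∀ i j l, B i j → B j l → B i l}

local notation "𝔄" => structuralMatrixAlgebra k B hrefl htrans

theorem single_mem {p q : Fin n} (h : B p q) (c : k) : single p q c ∈ 𝔄 := by
  intro i j hij
  exact single_apply_of_ne _ _ _ _ _ (by rintro ⟨rfl, rfl⟩; exact hij h)

theorem isFrobeniusAlgebra_of_symm (hsymm : ∀ i j, B i j → B j i) :
    IsFrobeniusAlgebra k 𝔄 := by
  refine ⟨traceLinearMap (Fin n) k k ∘ₗ (𝔄).val.toLinearMap, fun x hx => ?_, fun x hx => ?_⟩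
    <;> ext i j <;> by_cases hij : B i j
  · simpa [trace_mul_single] using hx ⟨single j i 1, single_mem (hsymm i j hij) 1⟩
  · exact x.2 i j hij
  · simpa [trace_single_mul] using hx ⟨single j i 1, single_mem (hsymm i j hij) 1⟩
  · exact x.2 i j hij

theorem card_le_of_left_nondegenerate [DecidableRel B] (l : 𝔄 →ₗ[k] k)
    (hl : ∀ a : 𝔄, (∀ b : 𝔄, l (a * b) = 0) → a = 0) (j : Fin n) :
    #{i | B i j} ≤ #{q | B j q} := by
  obtain ⟨C, hC⟩ := exists_eq_trace_mul_of_submodule (p := Subalgebra.toSubmodule 𝔄) l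
  let Φ : ({i // B i j} → k) →ₗ[k] ({q // B j q} → k) := LinearMap.funLeft k k Subtype.val ∘ₗ
    C.mulVecLin ∘ₗ Function.ExtendByZero.linearMap k Subtype.val
  have hΦ : Function.Injective Φ := by
    rw [← LinearMap.ker_eq_bot, LinearMap.ker_eq_bot']
    intro v hv
    set w := Function.extend Subtype.val v 0
    have hw : ∀ p, ¬ B p j → w p = 0 := fun p hp =>
      Function.extend_apply' _ _ p (by rintro ⟨i, rfl⟩; exact hp i.2)
    have hmem : vecMulVec w (Pi.single j 1) ∈ 𝔄 := by
      intro p q hpq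
      rw [vecMulVec_apply]
      by_cases hqj : q = j
      · subst hqj
        rw [hw p hpq, zero_mul]
      · rw [Pi.single_eq_of_ne hqj, mul_zero]
    have hx : (⟨vecMulVec w (Pi.single j 1), hmem⟩ : 𝔄) = 0 := hl _ fun y => by
      rw [hC]
      show trace (C * (vecMulVec w (Pi.single j 1) * (y : Matrix (Fin n) (Fin n) k))) = 0
      rw [vecMulVec_mul, mul_vecMulVec, trace_vecMulVec, single_one_vecMul]
      refine Finset.sum_eq_zero fun q _ => ?_
      by_cases hq : B j q
      · rw [show (C *ᵥ w) q = 0 from congr_fun hv ⟨q, hq⟩, zero_mul]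
      · rw [row_apply, y.2 j q hq, mul_zero]
    have hw0 : w = 0 := by
      simpa using congrArg Subtype.val hx
    funext i
    rw [← Subtype.val_injective.extend_apply v 0 i]
    exact congr_fun hw0 i
  simpa [Module.finrank_fintype_fun_eq_card, Fintype.card_subtype] using
    LinearMap.finrank_le_finrank_of_injective hΦ

theorem symm_of_isFrobeniusAlgebra (h : IsFrobeniusAlgebra k 𝔄) {i j : Fin n} (hij : B i j) :
    B j i := by
  classical
  obtain ⟨l, hl, -⟩ := h
  exact symm_of_card_le_card hrefl htrans (card_le_of_left_nondegenerate l hl) hij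

theorem isFrobeniusAlgebra_iff_symm : IsFrobeniusAlgebra k 𝔄 ↔ ∀ i j, B i j → B j i :=
  ⟨fun h _ _ => symm_of_isFrobeniusAlgebra h, isFrobeniusAlgebra_of_symm⟩

end structuralMatrixAlgebra

/-- `M(B, k)` is a Frobenius algebra if and only if
`B = (I₁ × I₁) ∪ … ∪ (I_r × I_r)` for some partition `I₁, …, I_r` of `{1, …, n}`;
equivalently, if and only if the preorder `B` is symmetric. -/
theorem statement3 (k : Type*) [Field k] {n : ℕ} (B : Fin n → Fin n → Prop)
    (hrefl : ∀ i, B i i) (htrans : ∀ i j l, B i j → B j l → B i l) :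
    (IsFrobeniusAlgebra k (structuralMatrixAlgebra k B hrefl htrans) ↔
      ∃ (r : ℕ) (I : Fin r → Finset (Fin n)),
        (∀ s t, s ≠ t → Disjoint (I s) (I t)) ∧ (∀ i, ∃ t, i ∈ I t) ∧
        ∀ i j, B i j ↔ ∃ t, i ∈ I t ∧ j ∈ I t) ∧
    (IsFrobeniusAlgebra k (structuralMatrixAlgebra k B hrefl htrans) ↔
      ∀ i j, B i j → B j i) := by
  have hfrob := structuralMatrixAlgebra.isFrobeniusAlgebra_iff_symm (k := k) (hrefl := hrefl)
    (htrans := htrans)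
  refine ⟨hfrob.trans ⟨fun hsymm => Setoid.exists_fin_indexed_partition
    ⟨B, hrefl, fun h => hsymm _ _ h, fun h h' => htrans _ _ _ h h'⟩, ?_⟩, hfrob⟩
  rintro ⟨r, I, -, -, hI⟩ i j hij
  obtain ⟨t, hi, hj⟩ := (hI i j).1 hij
  exact (hI j i).2 ⟨t, hj, hi⟩
end

section
/- A structural matrix algebra M(B,k) is semisimple if and only if the relation B is symmetric (i.e., (i,j) ∈ B implies (j,i) ∈ B). -/
/-!
If `B` is symmetric, `M(B, k)` is the sum of the left ideals `M(B, k) E_jj` (as `1 = ∑ E_jj`),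
and each of them is simple: a nonzero `x = r E_jj` has an entry `r_ij ≠ 0`, so `E_ji` lies in
`M(B, k)` and `E_ji x = r_ij E_jj` regenerates the ideal. Conversely, if `B i j` holds but
`B j i` does not, then `E_ij a E_ij = a_ji E_ij = 0` for every `a ∈ M(B, k)`, and a semisimple
ring has no nonzero `x` with `x R x = 0`.
-/

/-- Write the left ideal `R x` as `R e` with `e = r x` idempotent: then
`e = e ^ 2 = r (x r x) = 0`, so `R x = 0`. -/
theorem IsSemisimpleRing.eq_zero_of_forall_mul_mul_eq_zero {R : Type*} [Ring R]
    [IsSemisimpleRing R] {x : R} (h : ∀ a, x * a * x = 0) : x = 0 := by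
  obtain ⟨e, he, hspan⟩ := IsSemisimpleRing.ideal_eq_span_idempotent (Ideal.span {x})
  obtain ⟨r, rfl⟩ := Ideal.mem_span_singleton'.mp
    (hspan.symm ▸ Ideal.mem_span_singleton_self e : e ∈ Ideal.span {x})
  have he0 : r * x = 0 := by
    rw [← he.eq, mul_assoc, ← mul_assoc x, h, mul_zero]
  have hx : x ∈ Ideal.span {r * x} := hspan ▸ Ideal.mem_span_singleton_self x
  rwa [he0, Ideal.span_singleton_eq_bot.mpr rfl, Submodule.mem_bot] at hx

theorem Submodule.isSimpleModule_span_singleton {R M : Type*} [Ring R] [AddCommGroup M]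
    [Module R M] {m : M} (hm : m ≠ 0)
    (h : ∀ x ∈ span R {m}, x ≠ 0 → m ∈ span R {x}) : IsSimpleModule R (span R {m}) := by
  rw [isSimpleModule_iff_isAtom]
  refine ⟨by simpa using hm, fun N hN => ?_⟩
  by_contra hne
  obtain ⟨x, hxN, hx0⟩ := N.ne_bot_iff.mp hne
  exact hN.not_ge ((span_singleton_le_iff_mem m _).mpr
    (span_le.mpr (Set.singleton_subset_iff.mpr hxN) (h x (hN.le hxN) hx0)))

namespace structuralMatrixAlgebra

variable {k : Type*} [Field k] {n : ℕ} {B : Fin n → Fin n → Prop}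
  {hrefl : ∀ i, B i i} {htrans : ∀ i j l, B i j → B j l → B i l}

local notation "𝕄" => structuralMatrixAlgebra k B hrefl htrans

theorem single_mem_s4 {i j : Fin n} (hij : B i j) (c : k) :
    Matrix.single i j c ∈ 𝕄 := by
  classical
  rintro a b hab
  rw [Matrix.single_apply, if_neg (by rintro ⟨rfl, rfl⟩; exact hab hij)]

variable (hrefl htrans) in
def single {i j : Fin n} (hij : B i j) (c : k) : 𝕄 :=
  ⟨Matrix.single i j c, single_mem_s4 hij c⟩

@[simp]
theorem coe_single {i j : Fin n} (hij : B i j) (c : k) :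
    (single hrefl htrans hij c : Matrix (Fin n) (Fin n) k) = Matrix.single i j c :=
  rfl

theorem single_ne_zero {i j : Fin n} (hij : B i j) {c : k} (hc : c ≠ 0) :
    single hrefl htrans hij c ≠ 0 := fun h => by
  simpa [hc] using congrArg (fun A : 𝕄 => (A : Matrix (Fin n) (Fin n) k) i j) h

theorem symm_of_isSemisimpleRing (h : IsSemisimpleRing 𝕄) {i j : Fin n} (hij : B i j) :
    B j i := by
  by_contra hji
  apply single_ne_zero (hrefl := hrefl) (htrans := htrans) hij (one_ne_zero (α := k))
  refine IsSemisimpleRing.eq_zero_of_forall_mul_mul_eq_zero fun a => Subtype.ext ?_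
  simp [a.2 j i hji]

theorem single_self_mem_span_singleton (hsymm : ∀ i j, B i j → B j i) (j : Fin n) (x : 𝕄)
    (hx : x ∈ Submodule.span 𝕄 {single hrefl htrans (hrefl j) 1}) (hx0 : x ≠ 0) :
    single hrefl htrans (hrefl j) 1 ∈ Submodule.span 𝕄 {x} := by
  obtain ⟨r, rfl⟩ := Submodule.mem_span_singleton.mp hx
  obtain ⟨i, hi⟩ : ∃ i, (r : Matrix (Fin n) (Fin n) k) i j ≠ 0 := by
    by_contra! hr
    refine hx0 (Subtype.ext (Matrix.ext fun a b => ?_))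
    rcases eq_or_ne b j with rfl | hb
    · simp [Matrix.mul_single_apply_same, hr]
    · simp [Matrix.mul_single_apply_of_ne _ _ _ _ _ hb]
  have hij : B i j := by_contra fun h => hi (r.2 i j h)
  refine Submodule.mem_span_singleton.mpr
    ⟨single hrefl htrans (hsymm i j hij) ((r : Matrix (Fin n) (Fin n) k) i j)⁻¹,
      Subtype.ext ?_⟩
  simp [← mul_assoc, hi]

theorem isSemisimpleRing_of_symm (hsymm : ∀ i j, B i j → B j i) : IsSemisimpleRing 𝕄 := by
  refine isSemisimpleModule_of_isSemisimpleModule_submodule'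
    (p := fun j => Submodule.span 𝕄 {single hrefl htrans (hrefl j) 1})
    (fun j => ?_) ?_
  · have : IsSimpleModule 𝕄 (Submodule.span 𝕄 {single hrefl htrans (hrefl j) (1 : k)}) :=
      Submodule.isSimpleModule_span_singleton (single_ne_zero (hrefl j) one_ne_zero)
        (single_self_mem_span_singleton hsymm j)
    infer_instance
  · rw [eq_top_iff, ← Ideal.span_singleton_one, Submodule.span_le, Set.singleton_subset_iff]
    have h1 : (1 : 𝕄) = ∑ j, single hrefl htrans (hrefl j) 1 :=
      Subtype.ext (by simp [Matrix.sum_single_one])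
    rw [h1]
    exact Submodule.sum_mem _ fun j _ =>
      Submodule.mem_iSup_of_mem j (Submodule.mem_span_singleton_self _)

end structuralMatrixAlgebra

/-- `M(B, k)` is semisimple if and only if `B` is symmetric. -/
theorem statement4 (k : Type*) [Field k] {n : ℕ} (B : Fin n → Fin n → Prop)
    (hrefl : ∀ i, B i i) (htrans : ∀ i j l, B i j → B j l → B i l) :
    IsSemisimpleRing (structuralMatrixAlgebra k B hrefl htrans) ↔
      ∀ i j, B i j → B j i :=
  ⟨fun h _ _ => structuralMatrixAlgebra.symm_of_isSemisimpleRing h,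
    structuralMatrixAlgebra.isSemisimpleRing_of_symm⟩
end

section
/- Let C = IC(X) with X locally finite preordered, ~ the associated equivalence, and x ∈ X with finite equivalence class. The subspace S_x spanned by {e_{x,y} : y ~ x} is a simple left C*-module (equivalently, a simple right C-comodule) under the action c* → e_{x,y} = Σ_{x ≤ z ≤ y} c*(e_{z,y}) e_{x,z}. -/
open TensorProduct

/-- The underlying vector space of the incidence coalgebra `IC(X)`:
functions with finite support on the set of pairs `(x, y)` with `x ≤ y`. -/
abbrev IC (k X : Type*) [Field k] [Preorder X] : Type _ :=
  {p : X × X // p.1 ≤ p.2} →₀ k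

/-- The basis element `e_{x,y}` of the incidence coalgebra. -/
noncomputable def e (k : Type*) {X : Type*} [Field k] [Preorder X] (x y : X) (h : x ≤ y) :
    IC k X :=
  Finsupp.single ⟨(x, y), h⟩ 1

/-- The comultiplication `Δ(e_{x,y}) = Σ_{x ≤ z ≤ y} e_{x,z} ⊗ e_{z,y}`. -/
noncomputable def Δ (k : Type*) {X : Type*} [Field k] [Preorder X] [LocallyFiniteOrder X] :
    IC k X →ₗ[k] IC k X ⊗[k] IC k X :=
  Finsupp.lsum k fun p => LinearMap.toSpanSingleton k _
    (∑ z ∈ (Finset.Icc p.1.1 p.1.2).attach,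
      e k p.1.1 z.1 (Finset.mem_Icc.mp z.2).1 ⊗ₜ[k] e k z.1 p.1.2 (Finset.mem_Icc.mp z.2).2)

open Classical in
/-- The counit `ε(e_{x,y}) = δ_{x,y}`. -/
noncomputable def ε (k : Type*) {X : Type*} [Field k] [Preorder X] : IC k X →ₗ[k] k :=
  Finsupp.lsum k fun p => LinearMap.toSpanSingleton k k (if p.1.1 = p.1.2 then 1 else 0)

/-- The left action of `C* = Module.Dual k (IC k X)` on `C = IC k X` induced by the right
comodule structure: `c* → c = Σ c*(c₂) c₁`. -/
noncomputable def act (k : Type*) {X : Type*} [Field k] [Preorder X] [LocallyFiniteOrder X]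
    (f : Module.Dual k (IC k X)) : IC k X →ₗ[k] IC k X :=
  (TensorProduct.rid k (IC k X)).toLinearMap ∘ₗ TensorProduct.map LinearMap.id f ∘ₗ Δ k

/-- The right action of `C*` on `C`: `c ← c* = Σ c*(c₁) c₂`. -/
noncomputable def actR (k : Type*) {X : Type*} [Field k] [Preorder X] [LocallyFiniteOrder X]
    (f : Module.Dual k (IC k X)) : IC k X →ₗ[k] IC k X :=
  (TensorProduct.lid k (IC k X)).toLinearMap ∘ₗ TensorProduct.map f LinearMap.id ∘ₗ Δ k

/-- The dual basis functional `p_{x,y}`. -/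
noncomputable def pfun (k : Type*) {X : Type*} [Field k] [Preorder X] (x y : X) (h : x ≤ y) :
    Module.Dual k (IC k X) :=
  Finsupp.lapply ⟨(x, y), h⟩

/-- `S_x`: the span of `{e_{x,y} : y ~ x}`, where `x ~ y ↔ x ≤ y ∧ y ≤ x`. -/
noncomputable def Ssub (k : Type*) {X : Type*} [Field k] [Preorder X] (x : X) :
    Submodule k (IC k X) :=
  Submodule.span k {c | ∃ (y : X) (h : x ≤ y), y ≤ x ∧ c = e k x y h}

/-
The action only shortens the second index: `c* → e_{x,y}` is a combination of the `e_{x,z}`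
with `x ≤ z ≤ y ≤ x`, so `S_x` is stable. The dual basis functional `p_{w,y}` picks out one
coordinate and moves it: for every `c ∈ S_x`, `p_{w,y} → c = c(x,y) e_{x,w}`. Hence a stable
submodule containing some `c ≠ 0`, say with `c(x,y) ≠ 0`, contains every generator `e_{x,w}`
of `S_x`.
-/

section IncidenceCoalgebra

variable {k X : Type*} [Field k] [Preorder X]

lemma e_apply_self (x y : X) (h : x ≤ y) : e k x y h ⟨(x, y), h⟩ = 1 :=
  Finsupp.single_eq_same

lemma e_apply_of_ne {x y y' : X} (h : x ≤ y) (h' : x ≤ y') (hne : y' ≠ y) :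
    e k x y' h' ⟨(x, y), h⟩ = 0 :=
  Finsupp.single_eq_of_ne fun hp => hne (congrArg (fun p => p.1.2) hp).symm

open Classical in
lemma pfun_e {w v a b : X} (hwv : w ≤ v) (hab : a ≤ b) :
    pfun k w v hwv (e k a b hab) = if a = w ∧ b = v then 1 else 0 := by
  simp [pfun, e, Finsupp.single_apply, Subtype.ext_iff, Prod.ext_iff]

lemma e_mem_ssub {x y : X} (hxy : x ≤ y) (hyx : y ≤ x) : e k x y hxy ∈ Ssub k x :=
  Submodule.subset_span ⟨y, hxy, hyx, rfl⟩

lemma ssub_ne_bot (x : X) : Ssub k x ≠ ⊥ :=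
  (Submodule.ne_bot_iff _).mpr
    ⟨_, e_mem_ssub (le_refl x) le_rfl, Finsupp.single_ne_zero.mpr one_ne_zero⟩

lemma ssub_eq_supported (x : X) :
    Ssub k x = Finsupp.supported k k {p : {p : X × X // p.1 ≤ p.2} | p.1.1 = x ∧ p.1.2 ≤ x} := by
  rw [Finsupp.supported_eq_span_single, Ssub]
  congr 1
  ext c
  constructor
  · rintro ⟨y, h, hyx, rfl⟩
    exact ⟨⟨(x, y), h⟩, ⟨rfl, hyx⟩, rfl⟩
  · rintro ⟨⟨⟨x', y⟩, h⟩, ⟨rfl, hyx⟩, rfl⟩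
    exact ⟨y, h, hyx, rfl⟩

lemma exists_apply_ne_zero_of_mem_ssub {x : X} {c : IC k X} (hc : c ∈ Ssub k x) (hc0 : c ≠ 0) :
    ∃ (y : X) (hxy : x ≤ y), y ≤ x ∧ c ⟨(x, y), hxy⟩ ≠ 0 := by
  obtain ⟨⟨⟨x', y⟩, hxy⟩, hp⟩ := Finsupp.support_nonempty_iff.mpr hc0
  rw [ssub_eq_supported, Finsupp.mem_supported] at hc
  obtain ⟨rfl, hyx⟩ := hc hp
  exact ⟨y, hxy, hyx, Finsupp.mem_support_iff.mp hp⟩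

variable [LocallyFiniteOrder X]

lemma act_e (f : Module.Dual k (IC k X)) {x y : X} (h : x ≤ y) :
    act k f (e k x y h) =
      ∑ z ∈ (Finset.Icc x y).attach,
        f (e k z.1 y (Finset.mem_Icc.mp z.2).2) • e k x z.1 (Finset.mem_Icc.mp z.2).1 := by
  simp only [act, LinearMap.comp_apply, e, Δ, Finsupp.lsum_single,
    LinearMap.toSpanSingleton_apply, one_smul, map_sum, TensorProduct.map_tmul,
    LinearMap.id_apply, LinearEquiv.coe_coe, TensorProduct.rid_tmul]

lemma act_mem_ssub (f : Module.Dual k (IC k X)) {x : X} {c : IC k X} (hc : c ∈ Ssub k x) :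
    act k f c ∈ Ssub k x := by
  suffices Ssub k x ≤ (Ssub k x).comap (act k f) from this hc
  refine Submodule.span_le.mpr ?_
  rintro _ ⟨y, hxy, hyx, rfl⟩
  rw [SetLike.mem_coe, Submodule.mem_comap, act_e]
  exact Submodule.sum_mem _ fun z _ => Submodule.smul_mem _ _ <|
    e_mem_ssub _ ((Finset.mem_Icc.mp z.2).2.trans hyx)

lemma act_pfun_e_self {x w y : X} (hxw : x ≤ w) (hwy : w ≤ y) :
    act k (pfun k w y hwy) (e k x y (hxw.trans hwy)) = e k x w hxw := by
  rw [act_e, Finset.sum_eq_single_of_mem ⟨w, Finset.mem_Icc.mpr ⟨hxw, hwy⟩⟩ (Finset.mem_attach _ _)]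
  · simp [pfun_e]
  · intro z _ hz
    rw [pfun_e, if_neg fun h => hz (Subtype.ext h.1), zero_smul]

lemma act_pfun_e_of_ne {x y w v : X} (hxy : x ≤ y) (hwv : w ≤ v) (hne : v ≠ y) :
    act k (pfun k w v hwv) (e k x y hxy) = 0 := by
  rw [act_e]
  exact Finset.sum_eq_zero fun _ _ => by rw [pfun_e, if_neg fun h => hne h.2.symm, zero_smul]

lemma act_pfun_of_mem_ssub {x w y : X} (hxw : x ≤ w) (hwy : w ≤ y) {c : IC k X}
    (hc : c ∈ Ssub k x) :
    act k (pfun k w y hwy) c = c ⟨(x, y), hxw.trans hwy⟩ • e k x w hxw := by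
  refine LinearMap.eqOn_span' (g := (Finsupp.lapply ⟨(x, y), hxw.trans hwy⟩).smulRight
    (e k x w hxw)) ?_ hc
  rintro _ ⟨y', hxy', -, rfl⟩
  rw [LinearMap.smulRight_apply, Finsupp.lapply_apply]
  by_cases hy : y' = y
  · subst hy
    rw [act_pfun_e_self hxw hwy, e_apply_self, one_smul]
  · rw [act_pfun_e_of_ne hxy' hwy (Ne.symm hy), e_apply_of_ne _ _ hy, zero_smul]

lemma ssub_le_of_mem {x : X} {N : Submodule k (IC k X)}
    (hN : ∀ f : Module.Dual k (IC k X), ∀ c ∈ N, act k f c ∈ N)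
    {c : IC k X} (hcN : c ∈ N) (hcS : c ∈ Ssub k x) (hc0 : c ≠ 0) : Ssub k x ≤ N := by
  obtain ⟨y, hxy, hyx, hcy⟩ := exists_apply_ne_zero_of_mem_ssub hcS hc0
  refine Submodule.span_le.mpr ?_
  rintro _ ⟨w, hxw, hwx, rfl⟩
  have hact := hN (pfun k w y (hwx.trans hxy)) c hcN
  rw [act_pfun_of_mem_ssub hxw (hwx.trans hxy) hcS] at hact
  simpa [smul_smul, inv_mul_cancel₀ hcy] using N.smul_mem (c ⟨(x, y), hxy⟩)⁻¹ hact

end IncidenceCoalgebra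

theorem statement13_general (k X : Type*) [Field k] [Preorder X] [LocallyFiniteOrder X]
    (x : X) :
    Ssub k x ≠ ⊥ ∧
    (∀ (f : Module.Dual k (IC k X)), ∀ c ∈ Ssub k (X := X) x, act k f c ∈ Ssub k x) ∧
    (∀ N : Submodule k (IC k X), N ≤ Ssub k x →
      (∀ (f : Module.Dual k (IC k X)), ∀ c ∈ N, act k f c ∈ N) →
      N = ⊥ ∨ N = Ssub k x) := by
  refine ⟨ssub_ne_bot x, fun f _ hc => act_mem_ssub f hc, fun N hNS hN => ?_⟩
  refine (eq_or_ne N ⊥).imp id fun hN0 => ?_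
  obtain ⟨c, hcN, hc0⟩ := N.ne_bot_iff.mp hN0
  exact le_antisymm hNS (ssub_le_of_mem hN hcN (hNS hcN) hc0)

/-- `S_x` is a simple left `C*`-module under the action
`c* → e_{x,y} = Σ_{x ≤ z ≤ y} c*(e_{z,y}) e_{x,z}`: it is nonzero, stable under the
action, and has no nonzero proper stable submodules. (The equivalence class of `x` is
finite, automatically, by local finiteness.) -/
theorem statement13 (k X : Type*) [Field k] [Preorder X] [LocallyFiniteOrder X]
    (x : X) (hfin : {y : X | x ≤ y ∧ y ≤ x}.Finite) :
    Ssub k x ≠ ⊥ ∧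
    (∀ (f : Module.Dual k (IC k X)), ∀ c ∈ Ssub k (X := X) x, act k f c ∈ Ssub k x) ∧
    (∀ N : Submodule k (IC k X), N ≤ Ssub k x →
      (∀ (f : Module.Dual k (IC k X)), ∀ c ∈ N, act k f c ∈ N) →
      N = ⊥ ∨ N = Ssub k x) :=
  statement13_general k X x
end

section
/- Let X be a locally finite preordered set and n ≥ 0. The (n+1)-th term C_n of the coradical filtration of C = IC(X) (defined by C_0 = coradical, C_n = C_0 ∧ C_{n-1}, where U ∧ V = Δ^{-1}(U ⊗ C + C ⊗ V)) equals the span of all e_{x,y} such that the interval [x,y] has length at most n, i.e., every chain x = x_0 < x_1 < … < x_m = y (with strict inequalities meaning x_i ≤ x_{i+1} but not x_{i+1} ≤ x_i) has m ≤ n. -/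
open TensorProduct

/-- A subspace `D ⊆ IC(X)` is a subcoalgebra if `Δ(D) ⊆ D ⊗ D`. -/
def IsSubcoalgebra (k : Type*) {X : Type*} [Field k] [Preorder X] [LocallyFiniteOrder X]
    (D : Submodule k (IC k X)) : Prop :=
  ∀ c ∈ D, Δ k c ∈ LinearMap.range (TensorProduct.map D.subtype D.subtype)

/-- A subcoalgebra is simple if it is nonzero and has no nonzero proper subcoalgebras. -/
def IsSimpleSubcoalgebra (k : Type*) {X : Type*} [Field k] [Preorder X] [LocallyFiniteOrder X]
    (D : Submodule k (IC k X)) : Prop :=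
  IsSubcoalgebra k D ∧ D ≠ ⊥ ∧
    ∀ N : Submodule k (IC k X), N ≤ D → IsSubcoalgebra k N → N = ⊥ ∨ N = D

/-- The coradical of `IC(X)`: the sum of all its simple subcoalgebras. -/
noncomputable def coradical (k X : Type*) [Field k] [Preorder X] [LocallyFiniteOrder X] :
    Submodule k (IC k X) :=
  sSup {D : Submodule k (IC k X) | IsSimpleSubcoalgebra k D}

/-- The wedge `U ∧ V = Δ⁻¹(U ⊗ C + C ⊗ V)` of two subspaces of `C = IC(X)`. -/
noncomputable def wedge (k : Type*) {X : Type*} [Field k] [Preorder X] [LocallyFiniteOrder X]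
    (U V : Submodule k (IC k X)) : Submodule k (IC k X) :=
  Submodule.comap (Δ k)
    (LinearMap.range (TensorProduct.map U.subtype (LinearMap.id (R := k) (M := IC k X))) ⊔
      LinearMap.range (TensorProduct.map (LinearMap.id (R := k) (M := IC k X)) V.subtype))

/-- The coradical filtration: `C_0` is the coradical and `C_n = C_0 ∧ C_{n-1}`. -/
noncomputable def coradFil (k X : Type*) [Field k] [Preorder X] [LocallyFiniteOrder X] :
    ℕ → Submodule k (IC k X)
  | 0 => coradical k X
  | n + 1 => wedge k (coradical k X) (coradFil k X n)

/-!
The functionals `p_{x,z}` act on `C` by `e_{x,y} ← p_{x,z} = e_{z,y}` and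
`p_{z,y} → e_{x,y} = e_{x,z}`. A subcoalgebra is stable under both actions, so it contains
`e_{x,y}` as soon as one of its elements has a nonzero coefficient at `(x,y)`, and then it contains
every `e_{u,v}` with `[u,v] ⊆ [x,y]`. Hence the simple subcoalgebras are spanned by the blocks
`{e_{x,y} | x ≃ y ≃ x₀}` and the coradical is spanned by the `e_{x,y}` with `y ≤ x`.
The coefficient of `e_{x,y}` in `c` is `p_{z,y}(c ← p_{x,z})` for every `z ∈ [x,y]`, and this
functional kills `U ∧ V` when `p_{x,z}` kills `U` and `p_{z,y}` kills `V`. Hence the wedge of the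
spans of `{e_q | q ∈ s}` and `{e_q | q ∈ t}` is spanned by the `e_{x,y}` such that each
`z ∈ [x,y]` has `(x,z) ∈ s` or `(z,y) ∈ t`. The induction step is then the
recursion `ℓ[x,y] ≤ n + 1 ↔ ∀ z, x < z ≤ y → ℓ[z,y] ≤ n` for the length `ℓ` of intervals.
-/

def lengthLE (X : Type*) [Preorder X] (n : ℕ) : Set {p : X × X // p.1 ≤ p.2} :=
  {q | ∀ (m : ℕ) (ch : ℕ → X), ch 0 = q.1.1 → ch m = q.1.2 → (∀ i < m, ch i < ch (i + 1)) →
    m ≤ n}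

section Chains

variable {X : Type*} [Preorder X]

lemma le_of_chain {m : ℕ} {ch : ℕ → X} (hch : ∀ i < m, ch i < ch (i + 1)) {i j : ℕ}
    (hij : i ≤ j) (hjm : j ≤ m) : ch i ≤ ch j := by
  induction j, hij using Nat.le_induction with
  | base => exact le_rfl
  | succ j _ ih => exact (ih (by omega)).trans (hch j (by omega)).le

lemma mem_lengthLE_zero {q : {p : X × X // p.1 ≤ p.2}} : q ∈ lengthLE X 0 ↔ q.1.2 ≤ q.1.1 := by
  refine ⟨fun hq => ?_, fun hyx m ch h0 hm hch => ?_⟩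
  · by_contra hxy
    have := hq 1 (fun i => if i = 0 then q.1.1 else q.1.2) rfl rfl
      (fun | 0, _ => lt_of_le_not_ge q.2 hxy | _ + 1, hi => absurd hi (by omega))
    omega
  · by_contra! hm0
    have h1m : ch 1 ≤ ch 0 := h0 ▸ (le_of_chain hch hm0 le_rfl).trans (hm ▸ hyx)
    exact (hch 0 hm0).not_ge h1m

lemma mem_lengthLE_succ {n : ℕ} {q : {p : X × X // p.1 ≤ p.2}} :
    q ∈ lengthLE X (n + 1) ↔
      ∀ z (_ : q.1.1 < z) (hzy : z ≤ q.1.2), ⟨(z, q.1.2), hzy⟩ ∈ lengthLE X n := by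
  refine ⟨fun hq z hxz hzy m ch h0 hm hch => ?_, fun hq m ch h0 hm hch => ?_⟩
  · have := hq (m + 1) (fun i => if i = 0 then q.1.1 else ch (i - 1)) rfl (by simpa using hm)
      fun | 0, _ => by simpa [h0] using hxz | i + 1, _ => by simpa using hch i (by omega)
    omega
  · cases m with
    | zero => omega
    | succ m =>
      have hxz : q.1.1 < ch 1 := h0 ▸ hch 0 (by omega)
      have hzy : ch 1 ≤ q.1.2 := hm ▸ le_of_chain hch (by omega) le_rfl
      have := hq (ch 1) hxz hzy m (fun i => ch (i + 1)) rfl hm fun i _ => hch (i + 1) (by omega)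
      omega

end Chains

section Coalgebra

variable {k X : Type*} [Field k] [Preorder X]

lemma e_eq_single (q : {p : X × X // p.1 ≤ p.2}) :
    Finsupp.single q (1 : k) = e k q.1.1 q.1.2 q.2 := rfl

lemma pfun_e_self {x y : X} (h : x ≤ y) : pfun k x y h (e k x y h) = 1 :=
  Finsupp.single_eq_same

lemma pfun_e_of_ne {a b x y : X} (hab : a ≤ b) (h : x ≤ y) (hne : ¬ (x = a ∧ y = b)) :
    pfun k a b hab (e k x y h) = 0 :=
  Finsupp.single_eq_of_ne fun heq => hne (by simp_all)

lemma IC.lhom_ext {M : Type*} [AddCommGroup M] [Module k M] {f g : IC k X →ₗ[k] M}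
    (h : ∀ x y (hxy : x ≤ y), f (e k x y hxy) = g (e k x y hxy)) : f = g :=
  Finsupp.lhom_ext' fun q => LinearMap.ext_ring (h q.1.1 q.1.2 q.2)

variable [LocallyFiniteOrder X]

lemma Δ_e {x y : X} (h : x ≤ y) :
    Δ k (e k x y h) = ∑ z ∈ (Finset.Icc x y).attach,
      e k x z.1 (Finset.mem_Icc.mp z.2).1 ⊗ₜ[k] e k z.1 y (Finset.mem_Icc.mp z.2).2 := by
  simp [Δ, e]

lemma actR_e (f : Module.Dual k (IC k X)) {x y : X} (h : x ≤ y) :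
    actR k f (e k x y h) = ∑ z ∈ (Finset.Icc x y).attach,
      f (e k x z.1 (Finset.mem_Icc.mp z.2).1) • e k z.1 y (Finset.mem_Icc.mp z.2).2 := by
  simp [actR, Δ_e]

lemma actR_pfun_e {x y z : X} (h : x ≤ y) (hxz : x ≤ z) (hzy : z ≤ y) :
    actR k (pfun k x z hxz) (e k x y h) = e k z y hzy := by
  rw [actR_e, Finset.sum_eq_single_of_mem ⟨z, Finset.mem_Icc.mpr ⟨hxz, hzy⟩⟩
    (Finset.mem_attach _ _)]
  · rw [pfun_e_self, one_smul]
  · intro w _ hw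
    rw [pfun_e_of_ne _ _ fun h => hw (Subtype.ext h.2), zero_smul]

lemma actR_pfun_e_eq_zero {a x y z : X} (h : x ≤ y) (haz : a ≤ z)
    (hne : ¬ (x = a ∧ z ≤ y)) :
    actR k (pfun k a z haz) (e k x y h) = 0 := by
  refine (actR_e _ h).trans (Finset.sum_eq_zero fun w _ => ?_)
  rw [pfun_e_of_ne haz (Finset.mem_Icc.mp w.2).1 ?_, zero_smul]
  exact fun ⟨hxa, hwz⟩ => hne ⟨hxa, hwz ▸ (Finset.mem_Icc.mp w.2).2⟩

lemma act_pfun_e {x y z : X} (h : x ≤ y) (hxz : x ≤ z) (hzy : z ≤ y) :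
    act k (pfun k z y hzy) (e k x y h) = e k x z hxz := by
  rw [act_e, Finset.sum_eq_single_of_mem ⟨z, Finset.mem_Icc.mpr ⟨hxz, hzy⟩⟩
    (Finset.mem_attach _ _)]
  · rw [pfun_e_self, one_smul]
  · intro w _ hw
    rw [pfun_e_of_ne _ _ fun h => hw (Subtype.ext h.1), zero_smul]

lemma act_pfun_e_eq_zero {b x y z : X} (h : x ≤ y) (hzb : z ≤ b)
    (hne : ¬ (y = b ∧ x ≤ z)) :
    act k (pfun k z b hzb) (e k x y h) = 0 := by
  refine (act_e _ h).trans (Finset.sum_eq_zero fun w _ => ?_)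
  rw [pfun_e_of_ne hzb (Finset.mem_Icc.mp w.2).2 ?_, zero_smul]
  exact fun ⟨hwz, hyb⟩ => hne ⟨hyb, hwz ▸ (Finset.mem_Icc.mp w.2).1⟩

lemma pfun_comp_actR_pfun {x y z : X} (hxz : x ≤ z) (hzy : z ≤ y) :
    pfun k z y hzy ∘ₗ actR k (pfun k x z hxz) = pfun k x y (hxz.trans hzy) := by
  refine IC.lhom_ext fun u v huv => ?_
  rw [LinearMap.comp_apply]
  by_cases hu : u = x ∧ z ≤ v
  · obtain ⟨rfl, hzv⟩ := hu
    rw [actR_pfun_e huv hxz hzv]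
    by_cases hv : v = y
    · subst hv
      rw [pfun_e_self, pfun_e_self]
    · rw [pfun_e_of_ne _ _ fun h => hv h.2, pfun_e_of_ne _ _ fun h => hv h.2]
  · rw [actR_pfun_e_eq_zero huv hxz hu, map_zero, pfun_e_of_ne]
    rintro ⟨rfl, rfl⟩
    exact hu ⟨rfl, hzy⟩

lemma act_pfun_comp_actR_pfun {a b : X} (hab : a ≤ b) :
    act k (pfun k b b le_rfl) ∘ₗ actR k (pfun k a a le_rfl) =
      (pfun k a b hab).smulRight (e k a b hab) := by
  refine IC.lhom_ext fun u v huv => ?_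
  rw [LinearMap.comp_apply, LinearMap.smulRight_apply]
  by_cases hu : u = a
  · subst hu
    rw [actR_pfun_e huv le_rfl huv]
    by_cases hv : v = b
    · subst hv
      rw [act_pfun_e huv huv le_rfl, pfun_e_self, one_smul]
    · rw [act_pfun_e_eq_zero huv le_rfl fun h => hv h.1, pfun_e_of_ne _ _ fun h => hv h.2,
        zero_smul]
  · rw [actR_pfun_e_eq_zero huv le_rfl fun h => hu h.1, map_zero,
      pfun_e_of_ne _ _ fun h => hu h.1, zero_smul]

lemma IsSubcoalgebra.act_mem {N : Submodule k (IC k X)} (hN : IsSubcoalgebra k N)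
    (f : Module.Dual k (IC k X)) {c : IC k X} (hc : c ∈ N) : act k f c ∈ N := by
  obtain ⟨t, ht⟩ := hN c hc
  have key : (TensorProduct.rid k (IC k X)).toLinearMap ∘ₗ map LinearMap.id f ∘ₗ
      map N.subtype N.subtype =
      N.subtype ∘ₗ (TensorProduct.rid k N).toLinearMap ∘ₗ map LinearMap.id (f ∘ₗ N.subtype) :=
    TensorProduct.ext' fun a b => by simp
  have : act k f c =
      N.subtype (TensorProduct.rid k N (map LinearMap.id (f ∘ₗ N.subtype) t)) := by
    rw [act, LinearMap.comp_apply, LinearMap.comp_apply, ← ht]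
    exact LinearMap.congr_fun key t
  exact this ▸ Submodule.coe_mem _

lemma IsSubcoalgebra.actR_mem {N : Submodule k (IC k X)} (hN : IsSubcoalgebra k N)
    (f : Module.Dual k (IC k X)) {c : IC k X} (hc : c ∈ N) : actR k f c ∈ N := by
  obtain ⟨t, ht⟩ := hN c hc
  have key : (TensorProduct.lid k (IC k X)).toLinearMap ∘ₗ map f LinearMap.id ∘ₗ
      map N.subtype N.subtype =
      N.subtype ∘ₗ (TensorProduct.lid k N).toLinearMap ∘ₗ map (f ∘ₗ N.subtype) LinearMap.id :=
    TensorProduct.ext' fun a b => by simp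
  have : actR k f c =
      N.subtype (TensorProduct.lid k N (map (f ∘ₗ N.subtype) LinearMap.id t)) := by
    rw [actR, LinearMap.comp_apply, LinearMap.comp_apply, ← ht]
    exact LinearMap.congr_fun key t
  exact this ▸ Submodule.coe_mem _

lemma IsSubcoalgebra.e_mem_of_le {N : Submodule k (IC k X)} (hN : IsSubcoalgebra k N)
    {x y u v : X} {h : x ≤ y} (he : e k x y h ∈ N) (hxu : x ≤ u) (huv : u ≤ v) (hvy : v ≤ y) :
    e k u v huv ∈ N := by
  have hu := hN.actR_mem (pfun k x u hxu) he
  rw [actR_pfun_e h hxu (huv.trans hvy)] at hu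
  have huv' := hN.act_mem (pfun k v y hvy) hu
  rwa [act_pfun_e _ huv hvy] at huv'

lemma IsSubcoalgebra.e_mem_of_apply_ne_zero {N : Submodule k (IC k X)}
    (hN : IsSubcoalgebra k N) {c : IC k X} (hc : c ∈ N) {q : {p : X × X // p.1 ≤ p.2}}
    (hq : c q ≠ 0) :
    e k q.1.1 q.1.2 q.2 ∈ N := by
  have hcq :=
    hN.act_mem (pfun k q.1.2 q.1.2 le_rfl) (hN.actR_mem (pfun k q.1.1 q.1.1 le_rfl) hc)
  rw [← LinearMap.comp_apply, act_pfun_comp_actR_pfun q.2, LinearMap.smulRight_apply] at hcq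
  change c q • _ ∈ N at hcq
  simpa [smul_smul, inv_mul_cancel₀ hq] using N.smul_mem (c q)⁻¹ hcq

lemma isSubcoalgebra_supported {s : Set {p : X × X // p.1 ≤ p.2}}
    (hs : ∀ q ∈ s, ∀ z (h1 : q.1.1 ≤ z) (h2 : z ≤ q.1.2),
      ⟨(q.1.1, z), h1⟩ ∈ s ∧ ⟨(z, q.1.2), h2⟩ ∈ s) :
    IsSubcoalgebra k (Finsupp.supported k k s) := by
  set N : Submodule k (IC k X) := Finsupp.supported k k s
  suffices N ≤ (LinearMap.range (map N.subtype N.subtype)).comap (Δ k) from fun c hc => this hc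
  refine (Finsupp.supported_eq_span_single k s).le.trans (Submodule.span_le.mpr ?_)
  rintro _ ⟨q, hq, rfl⟩
  simp only [SetLike.mem_coe, Submodule.mem_comap]
  rw [e_eq_single, Δ_e]
  refine Submodule.sum_mem _ fun z _ => ?_
  have hz := Finset.mem_Icc.mp z.2
  exact ⟨(⟨_, Finsupp.single_mem_supported k 1 (hs q hq z.1 hz.1 hz.2).1⟩ : N) ⊗ₜ
    (⟨_, Finsupp.single_mem_supported k 1 (hs q hq z.1 hz.1 hz.2).2⟩ : N), rfl⟩

lemma IsSubcoalgebra.exists_e_mem {N : Submodule k (IC k X)} (hN : IsSubcoalgebra k N)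
    (hN0 : N ≠ ⊥) : ∃ q : {p : X × X // p.1 ≤ p.2}, e k q.1.1 q.1.2 q.2 ∈ N := by
  obtain ⟨c, hcN, hc0⟩ := (Submodule.ne_bot_iff N).mp hN0
  obtain ⟨q, hq⟩ := Finsupp.support_nonempty_iff.mpr hc0
  exact ⟨q, hN.e_mem_of_apply_ne_zero hcN (Finsupp.mem_support_iff.mp hq)⟩

lemma apply_actR_eq_zero_of_mem_wedge {U V : Submodule k (IC k X)}
    {f g : Module.Dual k (IC k X)} (hf : ∀ u ∈ U, f u = 0) (hg : ∀ v ∈ V, g v = 0)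
    {c : IC k X} (hc : c ∈ wedge k U V) : g (actR k f c) = 0 := by
  set Φ := g ∘ₗ (TensorProduct.lid k (IC k X)).toLinearMap ∘ₗ map f LinearMap.id
  have hU : LinearMap.range (map U.subtype LinearMap.id) ≤ LinearMap.ker Φ :=
    LinearMap.range_le_ker_iff.mpr (TensorProduct.ext' fun u b => by simp [Φ, hf u.1 u.2])
  have hV : LinearMap.range (map LinearMap.id V.subtype) ≤ LinearMap.ker Φ :=
    LinearMap.range_le_ker_iff.mpr (TensorProduct.ext' fun a v => by simp [Φ, hg v.1 v.2])
  exact LinearMap.mem_ker.mp (sup_le hU hV hc)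

lemma wedge_supported (s t : Set {p : X × X // p.1 ≤ p.2}) :
    wedge k (Finsupp.supported k k s) (Finsupp.supported k k t) =
      Finsupp.supported k k {q | ∀ z (h1 : q.1.1 ≤ z) (h2 : z ≤ q.1.2),
        ⟨(q.1.1, z), h1⟩ ∈ s ∨ ⟨(z, q.1.2), h2⟩ ∈ t} := by
  refine le_antisymm (fun c hc => (Finsupp.mem_supported' k c).mpr fun q hq => ?_) ?_
  · simp only [Set.mem_ofPred_eq, not_forall, not_or] at hq
    obtain ⟨z, hxz, hzy, hs, ht⟩ := hq
    change pfun k q.1.1 q.1.2 (hxz.trans hzy) c = 0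
    rw [← LinearMap.congr_fun (pfun_comp_actR_pfun hxz hzy) c]
    exact apply_actR_eq_zero_of_mem_wedge (f := pfun k q.1.1 z hxz) (g := pfun k z q.1.2 hzy)
      (fun u hu => (Finsupp.mem_supported' k u).mp hu _ hs)
      (fun v hv => (Finsupp.mem_supported' k v).mp hv _ ht) hc
  · refine (Finsupp.supported_eq_span_single k _).le.trans (Submodule.span_le.mpr ?_)
    rintro _ ⟨q, hq, rfl⟩
    simp only [SetLike.mem_coe, wedge, Submodule.mem_comap]
    rw [e_eq_single, Δ_e]
    refine Submodule.sum_mem _ fun z _ => ?_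
    have hz := Finset.mem_Icc.mp z.2
    rcases hq z.1 hz.1 hz.2 with hs | ht
    · exact Submodule.mem_sup_left ⟨(⟨_, Finsupp.single_mem_supported k 1 hs⟩ :
        Finsupp.supported k k s) ⊗ₜ e k z.1 q.1.2 hz.2, rfl⟩
    · exact Submodule.mem_sup_right ⟨e k q.1.1 z.1 hz.1 ⊗ₜ
        (⟨_, Finsupp.single_mem_supported k 1 ht⟩ : Finsupp.supported k k t), rfl⟩

/-- As `q.1 ≤ q.2`, these are the pairs both of whose ends are equivalent to `x`. -/
def diagBlock (x : X) : Set {p : X × X // p.1 ≤ p.2} :=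
  {q | x ≤ q.1.1 ∧ q.1.2 ≤ x}

lemma isSimpleSubcoalgebra_supported_diagBlock (x : X) :
    IsSimpleSubcoalgebra k (Finsupp.supported k k (diagBlock x)) := by
  refine ⟨?_, ?_, fun N hN hNsub => or_iff_not_imp_left.mpr fun hN0 => le_antisymm hN ?_⟩
  · exact isSubcoalgebra_supported fun q ⟨hxq, hqx⟩ z h1 h2 =>
      ⟨⟨hxq, h2.trans hqx⟩, ⟨hxq.trans h1, hqx⟩⟩
  · exact (Submodule.ne_bot_iff _).mpr ⟨_, Finsupp.single_mem_supported k 1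
      (show ⟨(x, x), le_rfl⟩ ∈ diagBlock x from ⟨le_rfl, le_rfl⟩),
      Finsupp.single_ne_zero.mpr one_ne_zero⟩
  obtain ⟨q, hq⟩ := hNsub.exists_e_mem hN0
  have ⟨hxq, hqx⟩ : q ∈ diagBlock x := (Finsupp.mem_supported k _).mp (hN hq)
    (Finsupp.mem_support_iff.mpr (by simp [e]))
  refine (Finsupp.supported_eq_span_single k _).le.trans (Submodule.span_le.mpr ?_)
  rintro _ ⟨q', ⟨hxq', hq'x⟩, rfl⟩
  exact hNsub.e_mem_of_le hq (q.2.trans (hqx.trans hxq')) q'.2 (hq'x.trans (hxq.trans q.2))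

lemma IsSimpleSubcoalgebra.le_supported_lengthLE_zero {D : Submodule k (IC k X)}
    (hD : IsSimpleSubcoalgebra k D) : D ≤ Finsupp.supported k k (lengthLE X 0) := by
  set S : Set {p : X × X // p.1 ≤ p.2} := {q | e k q.1.1 q.1.2 q.2 ∈ D ∧ q.1.2 ≤ q.1.1}
  have hSD : Finsupp.supported k k S ≤ D :=
    (Finsupp.supported_eq_span_single k S).le.trans
      (Submodule.span_le.mpr fun _ ⟨_, hq, hc⟩ => hc ▸ hq.1)
  have hS : IsSubcoalgebra k (Finsupp.supported k k S) :=
    isSubcoalgebra_supported fun q ⟨hqD, hyx⟩ z h1 h2 =>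
      ⟨⟨hD.1.e_mem_of_le hqD le_rfl h1 h2, h2.trans hyx⟩,
        ⟨hD.1.e_mem_of_le hqD h1 h2 le_rfl, hyx.trans h1⟩⟩
  have hS0 : Finsupp.supported k k S ≠ ⊥ := by
    obtain ⟨q, hq⟩ := hD.1.exists_e_mem hD.2.1
    have hqq : (⟨(q.1.1, q.1.1), le_rfl⟩ : {p : X × X // p.1 ≤ p.2}) ∈ S :=
      ⟨hD.1.e_mem_of_le hq le_rfl le_rfl q.2, le_rfl⟩
    exact (Submodule.ne_bot_iff _).mpr
      ⟨_, Finsupp.single_mem_supported k 1 hqq, Finsupp.single_ne_zero.mpr one_ne_zero⟩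
  rw [((hD.2.2 _ hSD hS).resolve_left hS0).symm]
  exact Finsupp.supported_mono fun q hq => mem_lengthLE_zero.mpr hq.2

lemma coradical_eq_supported : coradical k X = Finsupp.supported k k (lengthLE X 0) := by
  refine le_antisymm (sSup_le fun D hD => hD.le_supported_lengthLE_zero) ?_
  refine (Finsupp.supported_eq_span_single k _).le.trans (Submodule.span_le.mpr ?_)
  rintro _ ⟨q, hq, rfl⟩
  have hle : Finsupp.supported k k (diagBlock q.1.1) ≤ coradical k X :=
    le_sSup (isSimpleSubcoalgebra_supported_diagBlock q.1.1)
  exact hle (Finsupp.single_mem_supported k 1 ⟨le_rfl, mem_lengthLE_zero.mp hq⟩)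

lemma coradFil_eq_supported (n : ℕ) :
    coradFil k X n = Finsupp.supported k k (lengthLE X n) := by
  induction n with
  | zero => exact coradical_eq_supported
  | succ n ih =>
    rw [coradFil, ih, coradical_eq_supported, wedge_supported]
    congr 1
    ext q
    simp only [Set.mem_ofPred_eq, mem_lengthLE_zero, mem_lengthLE_succ, lt_iff_le_not_ge]
    exact forall_congr' fun z => ⟨fun h ⟨h1, h2⟩ hzy => (h h1 hzy).resolve_left h2,
      fun h h1 hzy => or_iff_not_imp_left.mpr fun h2 => h ⟨h1, h2⟩ hzy⟩

end Coalgebra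

/-- The `(n+1)`-st term `C_n` of the coradical filtration of `C = IC(X)` is
the span of those `e_{x,y}` for which the interval `[x,y]` has length at most `n`: every
chain `x = x_0 < x_1 < … < x_m = y` (where `a < b` means `a ≤ b` and not `b ≤ a`) has
`m ≤ n`. -/
theorem statement16 (k X : Type*) [Field k] [Preorder X] [LocallyFiniteOrder X] (n : ℕ) :
    coradFil k X n = Submodule.span k
      {c | ∃ (x y : X) (h : x ≤ y),
        (∀ (m : ℕ) (ch : ℕ → X), ch 0 = x → ch m = y →
          (∀ i < m, ch i ≤ ch (i + 1) ∧ ¬ ch (i + 1) ≤ ch i) → m ≤ n) ∧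
        c = e k x y h} := by
  rw [coradFil_eq_supported, Finsupp.supported_eq_span_single]
  congr 1
  ext c
  simp only [← lt_iff_le_not_ge]
  exact ⟨fun ⟨q, hq, hc⟩ => ⟨q.1.1, q.1.2, q.2, hq, hc.symm⟩,
    fun ⟨x, y, h, hxy, hc⟩ => ⟨⟨(x, y), h⟩, hxy, hc.symm⟩⟩
end
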